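/- There is no family of functions ⟨ℓ_α : ℕ → Ordinal⟩ indexed by α ≤ ω₁ together with strictly increasing maps σ^{αβ} : Ordinal → Ordinal for α < β ≤ ω₁ such that: (i) σ^{βγ} ∘ σ^{αβ} = σ^{αγ} whenever α < β < γ ≤ ω₁; (ii) for all α < β ≤ ω₁, ℓ_β ≤_lex σ^{αβ} ∘ ℓ_α (pointwise composition); and (iii) for every α < ω₁, ℓ_{α+1} <_lex σ^{α,α+1} ∘ ℓ_α (strict lexicographic inequality). -/

import Mathlib

noncomputable def omega1 : Ordinal := (Cardinal.aleph 1).ord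

/-- Strict lexicographic order on `ℕ → Ordinal`. -/
def LexLt (f g : ℕ → Ordinal) : Prop :=
  ∃ n, (∀ m < n, f m = g m) ∧ f n < g n

/-- Lexicographic (non-strict) order on `ℕ → Ordinal`. -/
def LexLe (f g : ℕ → Ordinal) : Prop := f = g ∨ LexLt f g

/-!
Call the coordinates `< n` *stable from `a`* if `ℓ γ m = σ β γ (ℓ β m)` for all `m < n` and
`a ≤ β < γ < ω₁`. If the coordinates `< n` are stable from `a`, then (ii) gives
`ℓ γ n ≤ σ β γ (ℓ β n)` beyond `a`, so by commutation and monotonicity the ordinals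
`σ β ω₁ (ℓ β n)` decrease weakly in `β`; being well-ordered they are eventually constant, and
injectivity of `σ γ ω₁` makes coordinate `n` stable too. The supremum `A` of these countably many
countable stages is countable, and at `A` every coordinate is stable, so
`ℓ (A + 1) = σ A (A + 1) ∘ ℓ A`, contradicting (iii).
-/

open Ordinal

universe u

theorem LexLt.irrefl (f : ℕ → Ordinal) : ¬ LexLt f f :=
  fun ⟨_, _, h⟩ => h.false

theorem LexLe.apply_le_of_forall_lt_eq {f g : ℕ → Ordinal} {n : ℕ} (h : LexLe f g)
    (hagree : ∀ m < n, f m = g m) : f n ≤ g n := by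
  rcases h with rfl | ⟨k, hk, hlt⟩
  · exact le_rfl
  · rcases lt_trichotomy k n with hkn | rfl | hnk
    · exact absurd (hagree k hkn) hlt.ne
    · exact hlt.le
    · exact (hk n hnk).le

theorem AntitoneOn.exists_forall_le_eq {ι α : Type*} [Preorder ι] [LinearOrder α]
    [WellFoundedLT α] {s : Set ι} {F : ι → α} (hF : AntitoneOn F s) (hs : s.Nonempty) :
    ∃ i ∈ s, ∀ j ∈ s, i ≤ j → F j = F i := by
  obtain ⟨i, hi, hmin⟩ := wellFounded_lt.has_min (F '' s) (hs.image F)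
  obtain ⟨i, hi, rfl⟩ := hi
  exact ⟨i, hi, fun j hj hij =>
    (hF hi hj hij).antisymm (not_lt.mp (hmin (F j) (Set.mem_image_of_mem F hj)))⟩

theorem omega1_eq : omega1.{u} = ω₁ := Cardinal.ord_aleph 1

section CoherentSystem

universe v

variable {ℓ : Ordinal.{u} → ℕ → Ordinal.{v}} {σ : Ordinal.{u} → Ordinal.{u} → Ordinal.{v} → Ordinal.{v}}
  {κ : Ordinal.{u}}

def CoordsStableFrom (ℓ : Ordinal.{u} → ℕ → Ordinal.{v})
    (σ : Ordinal.{u} → Ordinal.{u} → Ordinal.{v} → Ordinal.{v}) (κ : Ordinal.{u}) (n : ℕ)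
    (a : Ordinal.{u}) : Prop :=
  ∀ β γ, a ≤ β → β < γ → γ < κ → ∀ m < n, ℓ γ m = σ β γ (ℓ β m)

theorem CoordsStableFrom.zero (a : Ordinal) : CoordsStableFrom ℓ σ κ 0 a :=
  fun _ _ _ _ _ m hm => absurd hm m.not_lt_zero

theorem CoordsStableFrom.mono {n : ℕ} {a a' : Ordinal} (h : CoordsStableFrom ℓ σ κ n a)
    (ha : a ≤ a') : CoordsStableFrom ℓ σ κ n a' :=
  fun β γ hβ => h β γ (ha.trans hβ)

theorem CoordsStableFrom.apply_le {n : ℕ} {a : Ordinal}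
    (hle : ∀ α β, α < β → β ≤ κ → LexLe (ℓ β) ((σ α β) ∘ (ℓ α)))
    (h : CoordsStableFrom ℓ σ κ n a) {β γ : Ordinal} (hβ : a ≤ β) (hβγ : β < γ) (hγ : γ < κ) :
    ℓ γ n ≤ σ β γ (ℓ β n) :=
  (hle β γ hβγ hγ.le).apply_le_of_forall_lt_eq (h β γ hβ hβγ hγ)

theorem CoordsStableFrom.antitoneOn_image_top {n : ℕ} {a : Ordinal}
    (hmono : ∀ α β, α < β → β ≤ κ → StrictMono (σ α β))
    (hcomm : ∀ α β γ, α < β → β < γ → γ ≤ κ → (σ β γ) ∘ (σ α β) = σ α γ)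
    (hle : ∀ α β, α < β → β ≤ κ → LexLe (ℓ β) ((σ α β) ∘ (ℓ α)))
    (h : CoordsStableFrom ℓ σ κ n a) :
    AntitoneOn (fun β => σ β κ (ℓ β n)) (Set.Ico a κ) := by
  intro β ⟨hβ, _⟩ γ ⟨_, hγ⟩ hβγ
  rcases hβγ.eq_or_lt with rfl | hβγ
  · exact le_rfl
  calc σ γ κ (ℓ γ n) ≤ σ γ κ (σ β γ (ℓ β n)) :=
        (hmono γ κ hγ le_rfl).monotone (h.apply_le hle hβ hβγ hγ)
    _ = σ β κ (ℓ β n) := congrFun (hcomm β γ κ hβγ hγ le_rfl) (ℓ β n)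

theorem CoordsStableFrom.exists_succ {n : ℕ} {a : Ordinal}
    (hmono : ∀ α β, α < β → β ≤ κ → StrictMono (σ α β))
    (hcomm : ∀ α β γ, α < β → β < γ → γ ≤ κ → (σ β γ) ∘ (σ α β) = σ α γ)
    (hle : ∀ α β, α < β → β ≤ κ → LexLe (ℓ β) ((σ α β) ∘ (ℓ α)))
    (h : CoordsStableFrom ℓ σ κ n a) (ha : a < κ) :
    ∃ a' < κ, CoordsStableFrom ℓ σ κ (n + 1) a' := by
  obtain ⟨a', ⟨haa', ha'⟩, hconst⟩ :=
    (h.antitoneOn_image_top hmono hcomm hle).exists_forall_le_eq ⟨a, le_rfl, ha⟩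
  refine ⟨a', ha', fun β γ hβ hβγ hγ m hm => ?_⟩
  rcases Nat.lt_succ_iff_lt_or_eq.mp hm with hm | rfl
  · exact h β γ (haa'.trans hβ) hβγ hγ m hm
  · have hcomm_m := congrFun (hcomm β γ κ hβγ hγ le_rfl) (ℓ β m)
    refine (hmono γ κ hγ le_rfl).injective ?_
    calc σ γ κ (ℓ γ m) = σ a' κ (ℓ a' m) :=
          hconst γ ⟨haa'.trans (hβ.trans hβγ.le), hγ⟩ (hβ.trans hβγ.le)
      _ = σ β κ (ℓ β m) := (hconst β ⟨haa'.trans hβ, hβγ.trans hγ⟩ hβ).symm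
      _ = σ γ κ (σ β γ (ℓ β m)) := hcomm_m.symm

theorem exists_coordsStableFrom
    (hmono : ∀ α β, α < β → β ≤ κ → StrictMono (σ α β))
    (hcomm : ∀ α β γ, α < β → β < γ → γ ≤ κ → (σ β γ) ∘ (σ α β) = σ α γ)
    (hle : ∀ α β, α < β → β ≤ κ → LexLe (ℓ β) ((σ α β) ∘ (ℓ α)))
    (hκ : 0 < κ) (n : ℕ) : ∃ a < κ, CoordsStableFrom ℓ σ κ n a := by
  induction n with
  | zero => exact ⟨0, hκ, CoordsStableFrom.zero 0⟩
  | succ n ih =>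
    obtain ⟨a, ha, h⟩ := ih
    exact h.exists_succ hmono hcomm hle ha

theorem CoordsStableFrom.eq_comp_of_forall {a β : Ordinal}
    (h : ∀ n, CoordsStableFrom ℓ σ κ n a) (hβ : a ≤ β) (hβκ : β + 1 < κ) :
    ℓ (β + 1) = σ β (β + 1) ∘ ℓ β :=
  funext fun m => h (m + 1) β (β + 1) hβ (Order.lt_add_one_iff.mpr le_rfl) hβκ m m.lt_succ_self

end CoherentSystem

/-- There is no `ω₁`-length system of lexicographically strictly decreasing
functions with strictly increasing commuting maps. -/
theorem no_decreasing_system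
    (ℓ : Ordinal → ℕ → Ordinal) (σ : Ordinal → Ordinal → Ordinal → Ordinal)
    (hmono : ∀ α β, α < β → β ≤ omega1 → StrictMono (σ α β))
    (hcomm : ∀ α β γ, α < β → β < γ → γ ≤ omega1 →
      (σ β γ) ∘ (σ α β) = σ α γ)
    (hle : ∀ α β, α < β → β ≤ omega1 → LexLe (ℓ β) ((σ α β) ∘ (ℓ α)))
    (hlt : ∀ α, α < omega1 → LexLt (ℓ (α + 1)) ((σ α (α + 1)) ∘ (ℓ α))) :
    False := by
  have hlim : Order.IsSuccLimit omega1 := omega1_eq ▸ Cardinal.isSuccLimit_omega 1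
  choose a ha hstable using exists_coordsStableFrom hmono hcomm hle hlim.bot_lt
  set A := ⨆ n, a n
  have hA : A < omega1 := omega1_eq ▸ Ordinal.iSup_lt_omega_one (omega1_eq ▸ ha)
  have hstableA : ∀ n, CoordsStableFrom ℓ σ omega1 n A :=
    fun n => (hstable n).mono (Ordinal.le_iSup a n)
  have hsucc : ℓ (A + 1) = σ A (A + 1) ∘ ℓ A :=
    CoordsStableFrom.eq_comp_of_forall hstableA le_rfl (hlim.add_one_lt hA)
  exact LexLt.irrefl _ (hsucc ▸ hlt A hA)
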